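/- The canonical model M is terminal in the category of saturated Kripke structures: for every saturated Kripke structure X there exists exactly one Kripke homomorphism from X to M, namely the map sending x ∈ X to its theory ⟦x⟧ := {φ | x ⊨ φ}. -/

import Mathlib

/-- Modal formulas over a set `Φ` of atomic propositions. -/
inductive ModalFormula (Φ : Type*) : Type _ where
  | atom : Φ → ModalFormula Φ
  | top  : ModalFormula Φ
  | bot  : ModalFormula Φ
  | neg  : ModalFormula Φ → ModalFormula Φ
  | and  : ModalFormula Φ → ModalFormula Φ → ModalFormula Φ
  | or   : ModalFormula Φ → ModalFormula Φ → ModalFormula Φ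
  | box  : ModalFormula Φ → ModalFormula Φ

/-- `◇φ := ¬□¬φ`. -/
def ModalFormula.dia {Φ : Type*} (φ : ModalFormula Φ) : ModalFormula Φ :=
  .neg (.box (.neg φ))

/-- A Kripke structure on state set `X`: a transition relation and a valuation. -/
structure KripkeStructure (Φ X : Type*) where
  R : X → X → Prop
  v : X → Set Φ

/-- Satisfaction `x ⊨ φ`. -/
def Satisfies {Φ X : Type*} (M : KripkeStructure Φ X) : X → ModalFormula Φ → Prop
  | x, .atom p  => p ∈ M.v x
  | _, .top     => True
  | _, .bot     => False
  | x, .neg φ   => ¬ Satisfies M x φ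
  | x, .and φ ψ => Satisfies M x φ ∧ Satisfies M x ψ
  | x, .or φ ψ  => Satisfies M x φ ∨ Satisfies M x ψ
  | x, .box φ   => ∀ y, M.R x y → Satisfies M y φ

/-- `B` is a bisimulation between `M` and `N`. -/
def IsBisimulation {Φ X Y : Type*} (M : KripkeStructure Φ X) (N : KripkeStructure Φ Y)
    (B : X → Y → Prop) : Prop :=
  ∀ x y, B x y →
    M.v x = N.v y ∧
    (∀ x', M.R x x' → ∃ y', N.R y y' ∧ B x' y') ∧
    (∀ y', N.R y y' → ∃ x', M.R x x' ∧ B x' y')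

/-- `x ∼ y` : there is a bisimulation relating `x` and `y`. -/
def Bisimilar {Φ X Y : Type*} (M : KripkeStructure Φ X) (N : KripkeStructure Φ Y)
    (x : X) (y : Y) : Prop :=
  ∃ B : X → Y → Prop, IsBisimulation M N B ∧ B x y

/-- `x ≈ y` : logical equivalence. -/
def LogEquiv {Φ X Y : Type*} (M : KripkeStructure Φ X) (N : KripkeStructure Φ Y)
    (x : X) (y : Y) : Prop :=
  ∀ φ : ModalFormula Φ, Satisfies M x φ ↔ Satisfies N y φ

/-- A Kripke homomorphism: a map whose graph is a bisimulation. -/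
def IsKripkeHom {Φ X Y : Type*} (M : KripkeStructure Φ X) (N : KripkeStructure Φ Y)
    (f : X → Y) : Prop :=
  IsBisimulation M N (fun x y => y = f x)

/-- `x` is m-saturated: whenever every finite subset of `S` is satisfied at some
successor of `x`, some successor of `x` satisfies all of `S`. -/
def MSaturated {Φ X : Type*} (M : KripkeStructure Φ X) (x : X) : Prop :=
  ∀ S : Set (ModalFormula Φ),
    (∀ S₀ ⊆ S, S₀.Finite → ∃ y, M.R x y ∧ ∀ φ ∈ S₀, Satisfies M y φ) →
    ∃ y, M.R x y ∧ ∀ φ ∈ S, Satisfies M y φ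

/-- A Kripke structure is saturated if every state is m-saturated. -/
def Saturated {Φ X : Type*} (M : KripkeStructure Φ X) : Prop :=
  ∀ x : X, MSaturated M x

/-- `φ → ψ` abbreviates `¬φ ∨ ψ`. -/
def ModalFormula.impl {Φ : Type*} (φ ψ : ModalFormula Φ) : ModalFormula Φ :=
  .or (.neg φ) ψ

/-- Propositional evaluation of a modal formula: the boolean connectives are
interpreted classically were atoms and boxed formulas get their truth value
from the assignment `w`. -/
def PropEval {Φ : Type*} (w : ModalFormula Φ → Prop) : ModalFormula Φ → Prop
  | .atom p  => w (.atom p)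
  | .top     => True
  | .bot     => False
  | .neg φ   => ¬ PropEval w φ
  | .and φ ψ => PropEval w φ ∧ PropEval w ψ
  | .or φ ψ  => PropEval w φ ∨ PropEval w ψ
  | .box φ   => w (.box φ)

/-- A propositional tautology: true under every assignment of truth values to
atoms and boxed formulas. -/
def IsPropTautology {Φ : Type*} (φ : ModalFormula Φ) : Prop :=
  ∀ w : ModalFormula Φ → Prop, PropEval w φ

/-- Derivability in the minimal normal modal logic K: all propositional
tautologies, the axiom `□(φ→ψ) → (□φ→□ψ)`, modus ponens and necessitation. -/
inductive Deriv {Φ : Type*} : ModalFormula Φ → Prop where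
  | taut {φ} : IsPropTautology φ → Deriv φ
  | axK (φ ψ : ModalFormula Φ) :
      Deriv (ModalFormula.impl (.box (ModalFormula.impl φ ψ))
        (ModalFormula.impl (.box φ) (.box ψ)))
  | mp {φ ψ} : Deriv (ModalFormula.impl φ ψ) → Deriv φ → Deriv ψ
  | nec {φ} : Deriv φ → Deriv (.box φ)

/-- Conjunction of a finite list of formulas. -/
def listConj {Φ : Type*} (L : List (ModalFormula Φ)) : ModalFormula Φ :=
  L.foldr .and .top

/-- `u` is consistent if no finite subset of `u` derives `⊥`. -/
def Consistent {Φ : Type*} (u : Set (ModalFormula Φ)) : Prop :=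
  ∀ L : List (ModalFormula Φ), (∀ φ ∈ L, φ ∈ u) →
    ¬ Deriv (ModalFormula.impl (listConj L) .bot)

/-- `u` is maximally consistent. -/
def MaxConsistent {Φ : Type*} (u : Set (ModalFormula Φ)) : Prop :=
  Consistent u ∧ ∀ φ : ModalFormula Φ, φ ∈ u ∨ ModalFormula.neg φ ∈ u

/-- The states of the canonical model: maximally consistent sets. -/
def CanonicalState (Φ : Type*) : Type _ :=
  {u : Set (ModalFormula Φ) // MaxConsistent u}

/-- The canonical model: `u → w` iff `□φ ∈ u` implies `φ ∈ w`, and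
`v(u) = u ∩ Φ`. -/
def CanonicalModel (Φ : Type*) : KripkeStructure Φ (CanonicalState Φ) where
  R u w := ∀ φ : ModalFormula Φ, ModalFormula.box φ ∈ u.1 → φ ∈ w.1
  v u := {p : Φ | ModalFormula.atom p ∈ u.1}

/-!
Every homomorphism `f` into the canonical model sends `x` to its theory: bisimulations preserve
satisfaction, and by the truth lemma a canonical state satisfies exactly its own members (its box
case rests on Lindenbaum's lemma). Conversely the theory map is a homomorphism. Only the back
condition needs work: a canonical successor `w` of `⟦x⟧` is finitely satisfiable among the
successors of `x`, so saturation realises it at some successor `y`, and maximality forces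
`⟦y⟧ = w`.
-/

variable {Φ : Type u} {X : Type v}

section Derivations

theorem propEval_impl (w : ModalFormula Φ → Prop) (φ ψ : ModalFormula Φ) :
    PropEval w (φ.impl ψ) ↔ (PropEval w φ → PropEval w ψ) := by
  simp only [ModalFormula.impl, PropEval, imp_iff_not_or]

theorem propEval_listConj (w : ModalFormula Φ → Prop) (L : List (ModalFormula Φ)) :
    PropEval w (listConj L) ↔ ∀ φ ∈ L, PropEval w φ := by
  induction L with
  | nil => simp [listConj, PropEval]
  | cons a L ih =>
    simp only [listConj, List.foldr_cons, PropEval, List.forall_mem_cons] at ih ⊢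
    rw [ih]

theorem Deriv.of_taut_impl {φ ψ : ModalFormula Φ} (h : Deriv φ)
    (ht : IsPropTautology (φ.impl ψ)) : Deriv ψ :=
  .mp (.taut ht) h

theorem Deriv.of_taut_impl₂ {φ ψ χ : ModalFormula Φ} (h₁ : Deriv φ) (h₂ : Deriv ψ)
    (ht : IsPropTautology (φ.impl (ψ.impl χ))) : Deriv χ :=
  .mp (h₁.of_taut_impl ht) h₂

theorem Deriv.box_listConj_impl {L : List (ModalFormula Φ)} {φ : ModalFormula Φ}
    (h : Deriv ((listConj L).impl φ)) : Deriv ((listConj (L.map .box)).impl φ.box) := by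
  induction L generalizing φ with
  | nil =>
    have hφ : Deriv φ := h.of_taut_impl fun w => by simp [propEval_impl, listConj, PropEval]
    exact hφ.nec.of_taut_impl fun w =>
      (propEval_impl w _ _).2 fun hbox => (propEval_impl w _ _).2 fun _ => hbox
  | cons a L ih =>
    have h' := ih (φ := a.impl φ) (h.of_taut_impl fun w => by
      simp only [propEval_impl, listConj, List.foldr_cons, PropEval]; tauto)
    exact h'.of_taut_impl₂ (.axK a φ) fun w => by
      simp only [propEval_impl, listConj, List.map_cons, List.foldr_cons, PropEval]; tauto

end Derivations

section Soundness

theorem satisfies_impl (M : KripkeStructure Φ X) (x : X) (φ ψ : ModalFormula Φ) :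
    Satisfies M x (φ.impl ψ) ↔ (Satisfies M x φ → Satisfies M x ψ) := by
  simp only [ModalFormula.impl, Satisfies, imp_iff_not_or]

theorem satisfies_listConj (M : KripkeStructure Φ X) (x : X) (L : List (ModalFormula Φ)) :
    Satisfies M x (listConj L) ↔ ∀ φ ∈ L, Satisfies M x φ := by
  induction L with
  | nil => simp [listConj, Satisfies]
  | cons a L ih =>
    simp only [listConj, List.foldr_cons, Satisfies, List.forall_mem_cons] at ih ⊢
    rw [ih]

theorem propEval_satisfies (M : KripkeStructure Φ X) (x : X) (φ : ModalFormula Φ) :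
    PropEval (Satisfies M x) φ ↔ Satisfies M x φ := by
  induction φ with
  | neg φ ih => simp only [PropEval, Satisfies, ih]
  | and φ ψ ih₁ ih₂ | or φ ψ ih₁ ih₂ => simp only [PropEval, Satisfies, ih₁, ih₂]
  | _ => rfl

theorem Deriv.satisfies {φ : ModalFormula Φ} (h : Deriv φ) (M : KripkeStructure Φ X) (x : X) :
    Satisfies M x φ := by
  induction h generalizing x with
  | taut ht => exact (propEval_satisfies M x _).1 (ht _)
  | axK φ ψ =>
    simp only [satisfies_impl]
    exact fun himp hφ y hxy => (satisfies_impl M y φ ψ).1 (himp y hxy) (hφ y hxy)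
  | mp _ _ ih₁ ih₂ => exact (satisfies_impl M x _ _).1 (ih₁ x) (ih₂ x)
  | nec _ ih => exact fun y _ => ih y

theorem maxConsistent_theory (M : KripkeStructure Φ X) (x : X) :
    MaxConsistent {φ | Satisfies M x φ} :=
  ⟨fun L hL hbot =>
      (satisfies_impl M x _ _).1 (hbot.satisfies M x) ((satisfies_listConj M x L).2 hL),
    fun φ => em (Satisfies M x φ)⟩

end Soundness

namespace MaxConsistent

variable {u : Set (ModalFormula Φ)}

theorem mem_of_deriv (hu : MaxConsistent u) {L : List (ModalFormula Φ)} (hL : ∀ ψ ∈ L, ψ ∈ u)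
    {χ : ModalFormula Φ} (h : Deriv ((listConj L).impl χ)) : χ ∈ u := by
  refine (hu.2 χ).resolve_right fun hχ => hu.1 (L ++ [χ.neg]) ?_ (h.of_taut_impl ?_)
  · simpa [or_imp, forall_and] using And.intro hL hχ
  · intro w
    simp only [propEval_impl, propEval_listConj, List.forall_mem_append, List.forall_mem_singleton,
      PropEval]
    tauto

theorem mem_of_taut (hu : MaxConsistent u) {L : List (ModalFormula Φ)} (hL : ∀ ψ ∈ L, ψ ∈ u)
    {χ : ModalFormula Φ} (ht : ∀ w, (∀ ψ ∈ L, PropEval w ψ) → PropEval w χ) : χ ∈ u :=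
  hu.mem_of_deriv hL <| .taut fun w =>
    (propEval_impl w _ _).2 fun hLw => ht w ((propEval_listConj w L).1 hLw)

theorem neg_mem_iff (hu : MaxConsistent u) {φ : ModalFormula Φ} : φ.neg ∈ u ↔ φ ∉ u :=
  ⟨fun hn hφ => hu.1 [φ, φ.neg] (by simp [hφ, hn])
      (.taut fun w => by simp [propEval_impl, propEval_listConj, PropEval]),
    (hu.2 φ).resolve_left⟩

theorem and_mem_iff (hu : MaxConsistent u) {φ ψ : ModalFormula Φ} :
    φ.and ψ ∈ u ↔ φ ∈ u ∧ ψ ∈ u :=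
  ⟨fun h => ⟨hu.mem_of_taut (L := [φ.and ψ]) (by simpa) fun w => by simp [PropEval]; tauto,
      hu.mem_of_taut (L := [φ.and ψ]) (by simpa) fun w => by simp [PropEval]⟩,
    fun ⟨hφ, hψ⟩ => hu.mem_of_taut (L := [φ, ψ]) (by simp [hφ, hψ]) fun w => by simp [PropEval]⟩

theorem or_mem_iff (hu : MaxConsistent u) {φ ψ : ModalFormula Φ} :
    φ.or ψ ∈ u ↔ φ ∈ u ∨ ψ ∈ u := by
  refine ⟨fun h => (em (φ ∈ u)).imp_right fun hφ => ?_, ?_⟩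
  · exact hu.mem_of_taut (L := [φ.or ψ, φ.neg]) (by simp [h, hu.neg_mem_iff.2 hφ])
      fun w => by simp [PropEval]; tauto
  · rintro (h | h)
    · exact hu.mem_of_taut (L := [φ]) (by simpa) fun w => by simp [PropEval]; tauto
    · exact hu.mem_of_taut (L := [ψ]) (by simpa) fun w => by simp [PropEval]; tauto

theorem top_mem (hu : MaxConsistent u) : ModalFormula.top ∈ u :=
  hu.mem_of_taut (L := []) (by simp) fun _ _ => trivial

theorem bot_not_mem (hu : MaxConsistent u) : ModalFormula.bot ∉ u := fun h =>
  hu.1 [.bot] (by simpa) (.taut fun w => by simp [propEval_impl, propEval_listConj, PropEval])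

theorem listConj_mem (hu : MaxConsistent u) {L : List (ModalFormula Φ)} (hL : ∀ ψ ∈ L, ψ ∈ u) :
    listConj L ∈ u :=
  hu.mem_of_taut (L := L) hL fun w => (propEval_listConj w L).2

theorem eq_of_subset (hu : MaxConsistent u) {w : Set (ModalFormula Φ)} (hw : MaxConsistent w)
    (h : u ⊆ w) : u = w :=
  h.antisymm fun _ hφw => by_contra fun hφu => hw.neg_mem_iff.1 (h (hu.neg_mem_iff.2 hφu)) hφw

end MaxConsistent

section Lindenbaum

theorem Consistent.mono {S T : Set (ModalFormula Φ)} (hST : S ⊆ T) (hT : Consistent T) :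
    Consistent S :=
  fun L hL => hT L fun φ hφ => hST (hL φ hφ)

theorem isOfFiniteCharacter_consistent :
    Order.IsOfFiniteCharacter {S : Set (ModalFormula Φ) | Consistent S} :=
  fun _ => ⟨fun hS _ hT _ => hS.mono hT,
    fun h L hL => h {φ | φ ∈ L} (fun φ hφ => hL φ hφ) L.finite_toSet L fun _ => id⟩

theorem exists_deriv_neg_of_not_consistent_insert {S : Set (ModalFormula Φ)} {φ : ModalFormula Φ}
    (h : ¬ Consistent (insert φ S)) :
    ∃ L : List (ModalFormula Φ), (∀ ψ ∈ L, ψ ∈ S) ∧ Deriv ((listConj L).impl φ.neg) := by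
  classical
  simp only [Consistent, not_forall, not_not] at h
  obtain ⟨L, hL, hbot⟩ := h
  refine ⟨L.filter (· ∈ S), fun ψ hψ => by simpa using (List.mem_filter.1 hψ).2,
    hbot.of_taut_impl fun w => ?_⟩
  simp only [propEval_impl, propEval_listConj, PropEval, List.mem_filter, decide_eq_true_eq]
  intro hLbot hS hφ
  exact hLbot fun ψ hψ => (hL ψ hψ).elim (fun h => h ▸ hφ) fun h => hS ψ ⟨hψ, h⟩

theorem Consistent.insert_or_insert_neg {S : Set (ModalFormula Φ)} (hS : Consistent S)
    (φ : ModalFormula Φ) : Consistent (insert φ S) ∨ Consistent (insert φ.neg S) := by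
  by_contra! h
  obtain ⟨L₁, hL₁, h₁⟩ := exists_deriv_neg_of_not_consistent_insert h.1
  obtain ⟨L₂, hL₂, h₂⟩ := exists_deriv_neg_of_not_consistent_insert h.2
  refine hS (L₁ ++ L₂) (by simpa [or_imp, forall_and] using ⟨hL₁, hL₂⟩)
    (h₁.of_taut_impl₂ h₂ fun w => ?_)
  simp only [propEval_impl, propEval_listConj, List.forall_mem_append, PropEval]
  tauto

theorem exists_maxConsistent_superset {S : Set (ModalFormula Φ)} (hS : Consistent S) :
    ∃ u : CanonicalState Φ, S ⊆ u.1 := by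
  obtain ⟨m, hSm, hm⟩ := isOfFiniteCharacter_consistent.exists_maximal hS
  refine ⟨⟨m, hm.prop, fun φ => ?_⟩, hSm⟩
  exact (hm.prop.insert_or_insert_neg φ).imp hm.mem_of_prop_insert hm.mem_of_prop_insert

end Lindenbaum

namespace CanonicalModel

theorem exists_rel_neg_mem (u : CanonicalState Φ) {φ : ModalFormula Φ} (h : φ.box ∉ u.1) :
    ∃ w, (CanonicalModel Φ).R u w ∧ φ.neg ∈ w.1 := by
  have hS : Consistent (insert φ.neg {ψ | ψ.box ∈ u.1}) := by
    by_contra hS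
    obtain ⟨L, hL, hd⟩ := exists_deriv_neg_of_not_consistent_insert hS
    exact h <| u.2.mem_of_deriv (L := L.map .box) (by simpa using hL) <|
      Deriv.box_listConj_impl <| hd.of_taut_impl fun w => by simp [propEval_impl, PropEval]
  obtain ⟨w, hw⟩ := exists_maxConsistent_superset hS
  exact ⟨w, fun ψ hψ => hw (Set.mem_insert_of_mem _ hψ), hw (Set.mem_insert _ _)⟩

theorem satisfies_iff_mem (u : CanonicalState Φ) (φ : ModalFormula Φ) :
    Satisfies (CanonicalModel Φ) u φ ↔ φ ∈ u.1 := by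
  induction φ generalizing u with
  | atom p => rfl
  | top => exact iff_of_true trivial u.2.top_mem
  | bot => exact iff_of_false id u.2.bot_not_mem
  | neg φ ih => simp only [Satisfies, ih, u.2.neg_mem_iff]
  | and φ ψ ih₁ ih₂ => simp only [Satisfies, ih₁, ih₂, u.2.and_mem_iff]
  | or φ ψ ih₁ ih₂ => simp only [Satisfies, ih₁, ih₂, u.2.or_mem_iff]
  | box φ ih =>
    simp only [Satisfies, ih]
    refine ⟨fun h => by_contra fun hφ => ?_, fun h w huw => huw φ h⟩
    obtain ⟨w, huw, hw⟩ := exists_rel_neg_mem u hφ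
    exact w.2.neg_mem_iff.1 hw (h w huw)

end CanonicalModel

theorem IsBisimulation.satisfies_iff {Y : Type*} {M : KripkeStructure Φ X}
    {N : KripkeStructure Φ Y} {B : X → Y → Prop} (hB : IsBisimulation M N B) {x : X} {y : Y}
    (hxy : B x y) (φ : ModalFormula Φ) : Satisfies M x φ ↔ Satisfies N y φ := by
  induction φ generalizing x y with
  | atom p =>
    show p ∈ M.v x ↔ p ∈ N.v y
    rw [(hB x y hxy).1]
  | top | bot => rfl
  | neg φ ih => simp only [Satisfies, ih hxy]
  | and φ ψ ih₁ ih₂ | or φ ψ ih₁ ih₂ => simp only [Satisfies, ih₁ hxy, ih₂ hxy]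
  | box φ ih =>
    obtain ⟨-, forth, back⟩ := hB x y hxy
    refine ⟨fun h y' hyy' => ?_, fun h x' hxx' => ?_⟩
    · obtain ⟨x', hxx', hx'y'⟩ := back y' hyy'
      exact (ih hx'y').1 (h x' hxx')
    · obtain ⟨y', hyy', hx'y'⟩ := forth x' hxx'
      exact (ih hx'y').2 (h y' hyy')

noncomputable def theoryMap (M : KripkeStructure Φ X) (x : X) : CanonicalState Φ :=
  ⟨{φ | Satisfies M x φ}, maxConsistent_theory M x⟩

theorem IsKripkeHom.eq_theoryMap {M : KripkeStructure Φ X} {f : X → CanonicalState Φ}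
    (hf : IsKripkeHom M (CanonicalModel Φ) f) : f = theoryMap M :=
  funext fun x => Subtype.ext <| Set.ext fun φ =>
    (CanonicalModel.satisfies_iff_mem (f x) φ).symm.trans (hf.satisfies_iff rfl φ).symm

/-- If no successor of `x` satisfied the finite part `S₀` of `w`, then `x ⊨ □¬⋀S₀`, forcing
`¬⋀S₀ ∈ w`; so `w` is finitely satisfiable among the successors of `x`. -/
theorem exists_rel_theoryMap_eq {M : KripkeStructure Φ X} {x : X} (hx : MSaturated M x)
    {w : CanonicalState Φ} (hw : (CanonicalModel Φ).R (theoryMap M x) w) :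
    ∃ y, M.R x y ∧ w = theoryMap M y := by
  obtain ⟨y, hxy, hy⟩ := hx w.1 fun S₀ hS₀ hfin => by
    set L := hfin.toFinset.toList
    have hL : ∀ φ, φ ∈ L ↔ φ ∈ S₀ := by simp [L]
    by_contra! hnone
    have hbox : Satisfies M x (listConj L).neg.box := fun y hxy hconj =>
      let ⟨φ, hφ, hnφ⟩ := hnone y hxy
      hnφ ((satisfies_listConj M y L).1 hconj φ ((hL φ).2 hφ))
    exact w.2.neg_mem_iff.1 (hw _ hbox) (w.2.listConj_mem fun φ hφ => hS₀ ((hL φ).1 hφ))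
  exact ⟨y, hxy, Subtype.ext (w.2.eq_of_subset (maxConsistent_theory M y) hy)⟩

theorem isKripkeHom_theoryMap {M : KripkeStructure Φ X} (hM : Saturated M) :
    IsKripkeHom M (CanonicalModel Φ) (theoryMap M) := by
  rintro x _ rfl
  refine ⟨rfl, fun x' hxx' => ⟨theoryMap M x', fun φ hφ => hφ x' hxx', rfl⟩, fun w hw => ?_⟩
  obtain ⟨y, hxy, rfl⟩ := exists_rel_theoryMap_eq (hM x) hw
  exact ⟨y, hxy, rfl⟩

/-- The canonical model is terminal among saturated Kripke structures: from
every saturated Kripke structure there is exactly one homomorphism into the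
canonical model, namely the theory map `x ↦ ⟦x⟧ = {φ | x ⊨ φ}`. -/
theorem canonicalModel_terminal {Φ : Type u} {X : Type v}
    (M : KripkeStructure Φ X) (hM : Saturated M) :
    (∃! f : X → CanonicalState Φ, IsKripkeHom M (CanonicalModel Φ) f) ∧
    (∀ f : X → CanonicalState Φ, IsKripkeHom M (CanonicalModel Φ) f →
      ∀ x : X, (f x).1 = {φ : ModalFormula Φ | Satisfies M x φ}) :=
  ⟨⟨theoryMap M, isKripkeHom_theoryMap hM, fun _ hf => hf.eq_theoryMap⟩,
    fun _ hf x => by rw [hf.eq_theoryMap]; rfl⟩
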